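/- arXiv:1607.08782 — 3 statements merged into one kernel-verified Lean document; each statement's English description precedes it below -/
import Mathlib

section
/- Let [(A_1,…,A_k)(B_1,…,B_k)(C_1,…,C_k)(D_1,…,D_k)] be a k-chain decomposition of a bipartite graph G=(U,W,E), and set A = A_1∪…∪A_k, B = B_1∪…∪B_k. Then the parts of the decomposition inside the component G[A∪B] are uniquely determined by G[A∪B], k and A_1; namely: B_1 is the set of vertices of B having a neighbour in A_1; for 2 ≤ i ≤ k−1, A_i is the set of vertices of A∖(A_1∪…∪A_{i−1}) that have at least one non-neighbour in B_{i−1}, and B_i is the set of vertices of B∖(B_1∪…∪B_{i−1}) that have a neighbour in A_i; and if k ≥ 2 then A_k = A∖(A_1∪…∪A_{k−1}) and B_k = B∖(B_1∪…∪B_{k−1}). -/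
universe u

/-- `X` is complete to `Y` in `G`: every vertex of `X` is adjacent to every vertex of `Y`. -/
def CompleteTo {V : Type u} (G : SimpleGraph V) (X Y : Set V) : Prop :=
  ∀ ⦃x⦄, x ∈ X → ∀ ⦃y⦄, y ∈ Y → G.Adj x y

/-- `X` is anticomplete to `Y` in `G`. -/
def AnticompleteTo {V : Type u} (G : SimpleGraph V) (X Y : Set V) : Prop :=
  ∀ ⦃x⦄, x ∈ X → ∀ ⦃y⦄, y ∈ Y → ¬ G.Adj x y

/-- `(U, W)` is a bipartition of the vertex set of `G` into two independent sets. -/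
structure IsBipartition {V : Type u} (G : SimpleGraph V) (U W : Set V) : Prop where
  union_eq : U ∪ W = Set.univ
  disjoint : Disjoint U W
  cross : ∀ ⦃x y⦄, G.Adj x y → (x ∈ U ∧ y ∈ W) ∨ (x ∈ W ∧ y ∈ U)

/-- `G` contains an induced subgraph isomorphic to `H`. -/
def HasInducedCopy {α : Type*} {V : Type u} (H : SimpleGraph α) (G : SimpleGraph V) : Prop :=
  ∃ f : α ↪ V, ∀ a b : α, G.Adj (f a) (f b) ↔ H.Adj a b

/-- `G` has no induced subgraph isomorphic to the chordless path `P_m` on `m` vertices. -/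
def PathFree (m : ℕ) {V : Type u} (G : SimpleGraph V) : Prop :=
  ¬ HasInducedCopy (SimpleGraph.pathGraph m) G

/-- `G` is bipartite: its vertex set can be partitioned into (at most) two independent sets. -/
def Bipartite {V : Type u} (G : SimpleGraph V) : Prop :=
  ∃ U W : Set V, IsBipartition G U W

/-- The bipartite complement of `G` with respect to the parts `U` and `W`:
`u ∈ U` and `w ∈ W` are adjacent iff they are non-adjacent in `G`. -/
def bipComplOn {V : Type u} (G : SimpleGraph V) (U W : Set V) : SimpleGraph V where
  Adj x y := ((x ∈ U ∧ y ∈ W) ∨ (x ∈ W ∧ y ∈ U)) ∧ x ≠ y ∧ ¬ G.Adj x y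
  symm := by
    constructor
    rintro x y ⟨h1, h2, h3⟩
    exact ⟨by tauto, h2.symm, fun h => h3 h.symm⟩
  loopless := by constructor; rintro x ⟨_, h, _⟩; exact h rfl

/-- A `k`-chain decomposition `[(A_1,…,A_k)(B_1,…,B_k)(C_1,…,C_k)(D_1,…,D_k)]` of a
bipartite graph `G` with ordered parts `(U, W)`.  The sets are indexed by `1, …, k`. -/
structure IsChainDecomp {V : Type u} (G : SimpleGraph V) (U W : Set V) (k : ℕ)
    (A B C D : ℕ → Set V) : Prop where
  one_le : 1 ≤ k
  /-- `A_1, …, A_k, C_1, …, C_k` cover `U`. -/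
  U_eq : (⋃ i ∈ Set.Icc 1 k, A i) ∪ (⋃ i ∈ Set.Icc 1 k, C i) = U
  /-- `B_1, …, B_k, D_1, …, D_k` cover `W`. -/
  W_eq : (⋃ i ∈ Set.Icc 1 k, B i) ∪ (⋃ i ∈ Set.Icc 1 k, D i) = W
  /-- the sets `A_1, …, A_k, C_1, …, C_k` are pairwise disjoint. -/
  disjU : ∀ i ∈ Set.Icc 1 k, ∀ j ∈ Set.Icc 1 k,
      (i ≠ j → Disjoint (A i) (A j) ∧ Disjoint (C i) (C j)) ∧ Disjoint (A i) (C j)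
  /-- the sets `B_1, …, B_k, D_1, …, D_k` are pairwise disjoint. -/
  disjW : ∀ i ∈ Set.Icc 1 k, ∀ j ∈ Set.Icc 1 k,
      (i ≠ j → Disjoint (B i) (B j) ∧ Disjoint (D i) (D j)) ∧ Disjoint (B i) (D j)
  /-- for every `i ≤ k-1` the sets `A_i, B_i, C_i, D_i` are non-empty. -/
  nonempty_of_lt : ∀ i, 1 ≤ i → i < k →
      (A i).Nonempty ∧ (B i).Nonempty ∧ (C i).Nonempty ∧ (D i).Nonempty
  /-- for `i = k`, at least one of `A_k, B_k, C_k, D_k` is non-empty. -/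
  nonempty_last : (A k).Nonempty ∨ (B k).Nonempty ∨ (C k).Nonempty ∨ (D k).Nonempty
  /-- every vertex of `B_i` has a neighbour in `A_i`. -/
  B_nbr : ∀ i ∈ Set.Icc 1 k, ∀ b ∈ B i, ∃ a ∈ A i, G.Adj a b
  /-- every vertex of `D_i` has a neighbour in `C_i`. -/
  D_nbr : ∀ i ∈ Set.Icc 1 k, ∀ d ∈ D i, ∃ c ∈ C i, G.Adj c d
  /-- for `2 ≤ i ≤ k-1`, every vertex of `A_i` has a non-neighbour in `B_{i-1}`. -/
  A_nonnbr : ∀ i, 2 ≤ i → i < k → ∀ a ∈ A i, ∃ b ∈ B (i - 1), ¬ G.Adj a b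
  /-- for `2 ≤ i ≤ k-1`, every vertex of `C_i` has a non-neighbour in `D_{i-1}`. -/
  C_nonnbr : ∀ i, 2 ≤ i → i < k → ∀ c ∈ C i, ∃ d ∈ D (i - 1), ¬ G.Adj c d
  /-- `A_i` is anticomplete to `B_j` for `j > i` and complete to `B_j` for `j < i-1`. -/
  AB : ∀ i ∈ Set.Icc 1 k, ∀ j ∈ Set.Icc 1 k,
      (i < j → AnticompleteTo G (A i) (B j)) ∧ (j + 1 < i → CompleteTo G (A i) (B j))
  /-- `C_i` is anticomplete to `D_j` for `j > i` and complete to `D_j` for `j < i-1`. -/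
  CD : ∀ i ∈ Set.Icc 1 k, ∀ j ∈ Set.Icc 1 k,
      (i < j → AnticompleteTo G (C i) (D j)) ∧ (j + 1 < i → CompleteTo G (C i) (D j))
  /-- `A_i` is complete to `D_j` for `j < i` and anticomplete to `D_j` for `j ≥ i`. -/
  AD : ∀ i ∈ Set.Icc 1 k, ∀ j ∈ Set.Icc 1 k,
      (j < i → CompleteTo G (A i) (D j)) ∧ (i ≤ j → AnticompleteTo G (A i) (D j))
  /-- `C_i` is complete to `B_j` for `j < i` and anticomplete to `B_j` for `j ≥ i`. -/
  CB : ∀ i ∈ Set.Icc 1 k, ∀ j ∈ Set.Icc 1 k,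
      (j < i → CompleteTo G (C i) (B j)) ∧ (i ≤ j → AnticompleteTo G (C i) (B j))

/-- `G`, with ordered parts `(U, W)`, admits a `k`-chain decomposition for some `k ≥ 1`. -/
def HasChainDecompOriented {V : Type u} (G : SimpleGraph V) (U W : Set V) : Prop :=
  ∃ k : ℕ, ∃ A B C D : ℕ → Set V, IsChainDecomp G U W k A B C D

/-- `G` admits a chain decomposition, either with respect to `(U, W)` (left)
or with respect to `(W, U)` (right). -/
def HasChainDecomp {V : Type u} (G : SimpleGraph V) (U W : Set V) : Prop :=
  HasChainDecompOriented G U W ∨ HasChainDecompOriented G W U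

/-!
Removing `A_1, …, A_{i-1}` from `A` leaves `A_i ∪ … ∪ A_k`, and similarly for `B`. Inside
`A_i ∪ … ∪ A_k` the set `A_i` is singled out by having non-neighbours in `B_{i-1}`, because every
later `A_j` is complete to `B_{i-1}`; inside `B_i ∪ … ∪ B_k` the set `B_i` is singled out by having
neighbours in `A_i`, because `A_i` is anticomplete to every later `B_j`.
-/

theorem Set.PairwiseDisjoint.biUnion_Icc_diff_biUnion_Icc {V : Type u} {X : ℕ → Set V}
    {m i k : ℕ} (hX : (Set.Icc m k).PairwiseDisjoint X) (hmi : m ≤ i + 1) :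
    (⋃ j ∈ Set.Icc m k, X j) \ (⋃ j ∈ Set.Icc m i, X j) = ⋃ j ∈ Set.Icc (i + 1) k, X j := by
  ext x
  simp only [Set.mem_sdiff, Set.mem_iUnion₂, Set.mem_Icc, exists_prop]
  constructor
  · rintro ⟨⟨j, ⟨hmj, hjk⟩, hx⟩, hx_early⟩
    refine ⟨j, ⟨?_, hjk⟩, hx⟩
    by_contra hji
    exact hx_early ⟨j, ⟨hmj, by omega⟩, hx⟩
  · rintro ⟨j, ⟨hij, hjk⟩, hx⟩
    refine ⟨⟨j, ⟨by omega, hjk⟩, hx⟩, ?_⟩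
    rintro ⟨j', ⟨hmj', hj'i⟩, hx'⟩
    exact (hX ⟨hmj', by omega⟩ ⟨by omega, hjk⟩ (by omega)).ne_of_mem hx' hx rfl

namespace IsChainDecomp

variable {V : Type u} {G : SimpleGraph V} {U W : Set V} {k : ℕ} {A B C D : ℕ → Set V}

theorem pairwiseDisjoint_A (h : IsChainDecomp G U W k A B C D) :
    (Set.Icc 1 k).PairwiseDisjoint A :=
  fun _ hi _ hj hij => ((h.disjU _ hi _ hj).1 hij).1

theorem pairwiseDisjoint_B (h : IsChainDecomp G U W k A B C D) :
    (Set.Icc 1 k).PairwiseDisjoint B :=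
  fun _ hi _ hj hij => ((h.disjW _ hi _ hj).1 hij).1

theorem biUnion_diff_biUnion_A (h : IsChainDecomp G U W k A B C D) {i : ℕ} (hi : 1 ≤ i) :
    (⋃ j ∈ Set.Icc 1 k, A j) \ (⋃ j ∈ Set.Icc 1 (i - 1), A j) = ⋃ j ∈ Set.Icc i k, A j := by
  rw [h.pairwiseDisjoint_A.biUnion_Icc_diff_biUnion_Icc (by omega), Nat.sub_add_cancel hi]

theorem biUnion_diff_biUnion_B (h : IsChainDecomp G U W k A B C D) {i : ℕ} (hi : 1 ≤ i) :
    (⋃ j ∈ Set.Icc 1 k, B j) \ (⋃ j ∈ Set.Icc 1 (i - 1), B j) = ⋃ j ∈ Set.Icc i k, B j := by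
  rw [h.pairwiseDisjoint_B.biUnion_Icc_diff_biUnion_Icc (by omega), Nat.sub_add_cancel hi]

theorem B_eq_nbrs (h : IsChainDecomp G U W k A B C D) {i : ℕ} (hi : i ∈ Set.Icc 1 k) :
    B i = {b ∈ ⋃ j ∈ Set.Icc i k, B j | ∃ a ∈ A i, G.Adj a b} := by
  ext b
  simp only [Set.mem_ofPred_eq, Set.mem_iUnion₂, exists_prop]
  constructor
  · intro hb
    exact ⟨⟨i, ⟨le_rfl, hi.2⟩, hb⟩, h.B_nbr i hi b hb⟩
  · rintro ⟨⟨j, ⟨hij, hjk⟩, hb⟩, a, ha, hab⟩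
    obtain rfl | hlt := hij.eq_or_lt
    · exact hb
    · exact absurd hab ((h.AB i hi j ⟨hi.1.trans hij, hjk⟩).1 hlt ha hb)

theorem A_eq_nonnbrs (h : IsChainDecomp G U W k A B C D) {i : ℕ} (h2i : 2 ≤ i) (hik : i < k) :
    A i = {a ∈ ⋃ j ∈ Set.Icc i k, A j | ∃ b ∈ B (i - 1), ¬ G.Adj a b} := by
  ext a
  simp only [Set.mem_ofPred_eq, Set.mem_iUnion₂, exists_prop]
  constructor
  · intro ha
    exact ⟨⟨i, ⟨le_rfl, hik.le⟩, ha⟩, h.A_nonnbr i h2i hik a ha⟩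
  · rintro ⟨⟨j, ⟨hij, hjk⟩, ha⟩, b, hb, hab⟩
    obtain rfl | hlt := hij.eq_or_lt
    · exact ha
    · exact absurd ((h.AB j ⟨by omega, hjk⟩ (i - 1) ⟨by omega, by omega⟩).2 (by omega) ha hb) hab

end IsChainDecomp

/-- In a `k`-chain decomposition of a bipartite graph `G = (U, W, E)` the
parts of the decomposition inside the component `G[A ∪ B]` are uniquely determined by
`G[A ∪ B]`, `k` and `A₁`. -/
theorem chainDecomp_reconstruction {V : Type u} (G : SimpleGraph V) (U W : Set V)
    (k : ℕ) (A B C D : ℕ → Set V) (h : IsChainDecomp G U W k A B C D) :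
    B 1 = {b ∈ ⋃ j ∈ Set.Icc 1 k, B j | ∃ a ∈ A 1, G.Adj a b} ∧
    (∀ i, 2 ≤ i → i < k →
      A i = {a ∈ (⋃ j ∈ Set.Icc 1 k, A j) \ (⋃ j ∈ Set.Icc 1 (i - 1), A j) |
              ∃ b ∈ B (i - 1), ¬ G.Adj a b} ∧
      B i = {b ∈ (⋃ j ∈ Set.Icc 1 k, B j) \ (⋃ j ∈ Set.Icc 1 (i - 1), B j) |
              ∃ a ∈ A i, G.Adj a b}) ∧
    (2 ≤ k →
      A k = (⋃ j ∈ Set.Icc 1 k, A j) \ (⋃ j ∈ Set.Icc 1 (k - 1), A j) ∧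
      B k = (⋃ j ∈ Set.Icc 1 k, B j) \ (⋃ j ∈ Set.Icc 1 (k - 1), B j)) := by
  have h1k := h.one_le
  refine ⟨h.B_eq_nbrs ⟨le_rfl, h1k⟩, fun i h2i hik => ?_, fun _ => ?_⟩
  · rw [h.biUnion_diff_biUnion_A (by omega), h.biUnion_diff_biUnion_B (by omega)]
    exact ⟨h.A_eq_nonnbrs h2i hik, h.B_eq_nbrs ⟨by omega, hik.le⟩⟩
  · simp only [h.biUnion_diff_biUnion_A h1k, h.biUnion_diff_biUnion_B h1k, Set.Icc_self,
      Set.biUnion_singleton, and_self]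
end

section
/- Let G=(U,W,E) be a P_7-free bipartite graph such that: A ∪ Q ∪ C is a partition of U; B ∪ R ∪ D is a partition of W; every vertex in B has a neighbour in A; every vertex in R has a neighbour in Q; every vertex in D has a neighbour in C; A is anticomplete to R ∪ D; C is anticomplete to B ∪ R; and every vertex in Q is complete to at least one of the sets B and D. Let Q_B be the set of vertices of Q complete to B with at least one non-neighbour in D, Q_D the set of vertices of Q complete to D with at least one non-neighbour in B, Q_{BD} the set of vertices of Q complete to both B and D, R_B the set of vertices of R having at least one neighbour in Q_B, and R_D the set of vertices of R having at least one neighbour in Q_D. Then every vertex of Q_{BD} is complete to at least one of the sets R_B and R_D. -/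
universe u

/-!
Suppose `x ∈ Q_{BD}` misses `r ∈ R_B` and `r' ∈ R_D`, where `r` has a neighbour `q ∈ Q_B` and
`r'` a neighbour `q' ∈ Q_D`. Pick `d ∈ D` missed by `q`, `b ∈ B` missed by `q'`, a neighbour
`a ∈ A` of `b` and a neighbour `c ∈ C` of `d`. If `q ~ r'` then `a-b-q-r'-q'-d-c` is an induced
`P_7`; symmetrically if `q' ~ r` then `c-d-q'-r-q-b-a` is; and otherwise `r-q-b-x-d-q'-r'` is.
-/

open SimpleGraph

section InducedCopy

variable {α : Type*} {V : Type u} {H : SimpleGraph α} {G : SimpleGraph V}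

lemma hasInducedCopy_of_forall_adj_iff (hH : Function.Injective H.neighborSet) (f : α → V)
    (hf : ∀ a b, G.Adj (f a) (f b) ↔ H.Adj a b) : HasInducedCopy H G :=
  ⟨⟨f, fun a b hab => hH <| Set.ext fun c => by simp only [mem_neighborSet, ← hf, hab]⟩, hf⟩

/-- The endpoints of `P_3` are twins; in every other path, the neighbourhoods of `a < b` are
told apart by `a - 1`, or else (for `a = 0`) by `1` or `b + 1`. -/
lemma pathGraph_neighborSet_injective {n : ℕ} (hn : n ≠ 3) :
    Function.Injective (pathGraph n).neighborSet := by
  intro a b hab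
  have key : ∀ k, k < n → (((a : ℕ) + 1 = k ∨ k + 1 = a) ↔ ((b : ℕ) + 1 = k ∨ k + 1 = b)) :=
    fun k hk => by simpa only [mem_neighborSet, pathGraph_adj] using Set.ext_iff.mp hab ⟨k, hk⟩
  have := key (a - 1); have := key (a + 1); have := key (b - 1); have := key (b + 1)
  have := a.isLt; have := b.isLt
  ext
  omega

end InducedCopy

namespace IsBipartition

variable {V : Type u} {G : SimpleGraph V} {U W : Set V}

lemma symm (h : IsBipartition G U W) : IsBipartition G W U :=
  ⟨Set.union_comm U W ▸ h.union_eq, h.disjoint.symm, fun _ _ hxy => (h.cross hxy).symm⟩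

lemma not_adj_of_mem_left (h : IsBipartition G U W) {x y : V} (hx : x ∈ U) (hy : y ∈ U) :
    ¬ G.Adj x y := fun hxy => by
  rcases h.cross hxy with ⟨-, hy'⟩ | ⟨hx', -⟩
  · exact Set.disjoint_left.mp h.disjoint hy hy'
  · exact Set.disjoint_left.mp h.disjoint hx hx'

/-- Pairs at even distance lie on the same side, so only the six pairs at odd distance at least
`3` need to be checked; distinctness of the `vᵢ` then comes for free. -/
lemma hasInducedCopy_pathGraph_seven (h : IsBipartition G U W) {v₀ v₁ v₂ v₃ v₄ v₅ v₆ : V}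
    (h₀ : v₀ ∈ U) (h₁ : v₁ ∈ W) (h₂ : v₂ ∈ U) (h₃ : v₃ ∈ W) (h₄ : v₄ ∈ U) (h₅ : v₅ ∈ W)
    (h₆ : v₆ ∈ U) (e₀₁ : G.Adj v₀ v₁) (e₁₂ : G.Adj v₁ v₂) (e₂₃ : G.Adj v₂ v₃)
    (e₃₄ : G.Adj v₃ v₄) (e₄₅ : G.Adj v₄ v₅) (e₅₆ : G.Adj v₅ v₆)
    (n₀₃ : ¬ G.Adj v₀ v₃) (n₀₅ : ¬ G.Adj v₀ v₅) (n₁₄ : ¬ G.Adj v₁ v₄)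
    (n₁₆ : ¬ G.Adj v₁ v₆) (n₂₅ : ¬ G.Adj v₂ v₅) (n₃₆ : ¬ G.Adj v₃ v₆) :
    HasInducedCopy (pathGraph 7) G := by
  refine hasInducedCopy_of_forall_adj_iff (pathGraph_neighborSet_injective (by decide))
    ![v₀, v₁, v₂, v₃, v₄, v₅, v₆] fun i j => ?_
  fin_cases i <;> fin_cases j <;>
    simp only [pathGraph_adj] <;>
    first
      | exact iff_of_false G.irrefl (by decide)
      | exact iff_of_true ‹_› (by decide)
      | exact iff_of_true (G.adj_symm ‹_›) (by decide)
      | exact iff_of_false ‹_› (by decide)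
      | exact iff_of_false (mt G.adj_symm ‹_›) (by decide)
      | exact iff_of_false (h.not_adj_of_mem_left ‹_› ‹_›) (by decide)
      | exact iff_of_false (h.symm.not_adj_of_mem_left ‹_› ‹_›) (by decide)

lemma adj_or_adj_of_pathFree_seven (h : IsBipartition G U W) (hP7 : PathFree 7 G)
    {a q x q' c b r r' d : V} (ha : a ∈ U) (hq : q ∈ U) (hx : x ∈ U) (hq' : q' ∈ U) (hc : c ∈ U)
    (hb : b ∈ W) (hr : r ∈ W) (hr' : r' ∈ W) (hd : d ∈ W)
    (hab : G.Adj a b) (hcd : G.Adj c d) (hqb : G.Adj q b) (hqr : G.Adj q r)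
    (hq'd : G.Adj q' d) (hq'r' : G.Adj q' r') (hxb : G.Adj x b) (hxd : G.Adj x d)
    (hqd : ¬ G.Adj q d) (hq'b : ¬ G.Adj q' b) (har : ¬ G.Adj a r) (har' : ¬ G.Adj a r')
    (had : ¬ G.Adj a d) (hcb : ¬ G.Adj c b) (hcr : ¬ G.Adj c r) (hcr' : ¬ G.Adj c r') :
    G.Adj x r ∨ G.Adj x r' := by
  by_contra! hxr
  by_cases hqr' : G.Adj q r'
  · exact hP7 <| h.hasInducedCopy_pathGraph_seven ha hb hq hr' hq' hd hc
      hab hqb.symm hqr' hq'r'.symm hq'd hcd.symm har' had (mt G.adj_symm hq'b) (mt G.adj_symm hcb)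
      hqd (mt G.adj_symm hcr')
  by_cases hq'r : G.Adj q' r
  · exact hP7 <| h.hasInducedCopy_pathGraph_seven hc hd hq' hr hq hb ha
      hcd hq'd.symm hq'r hqr.symm hqb hab.symm hcr hcb (mt G.adj_symm hqd) (mt G.adj_symm had)
      hq'b (mt G.adj_symm har)
  · exact hP7 <| h.symm.hasInducedCopy_pathGraph_seven hr hq hb hx hd hq' hr'
      hqr.symm hqb hxb.symm hxd hq'd.symm hq'r' (mt G.adj_symm hxr.1) (mt G.adj_symm hq'r) hqd
      hqr' (mt G.adj_symm hq'b) hxr.2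

end IsBipartition

lemma completeTo_singleton {V : Type u} {G : SimpleGraph V} {x : V} {Y : Set V} :
    CompleteTo G {x} Y ↔ ∀ y ∈ Y, G.Adj x y := by
  simp [CompleteTo]

theorem QBD_complete_to_RB_or_RD_general {V : Type u} (G : SimpleGraph V) (U W : Set V)
    (A Q C B R D : Set V)
    (hbip : IsBipartition G U W) (hP7 : PathFree 7 G)
    (hU : A ∪ Q ∪ C = U)
    (hW : B ∪ R ∪ D = W)
    (hB : ∀ b ∈ B, ∃ a ∈ A, G.Adj a b)
    (hD : ∀ d ∈ D, ∃ c ∈ C, G.Adj c d)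
    (hA : AnticompleteTo G A (R ∪ D))
    (hC : AnticompleteTo G C (B ∪ R))
    (QB QD QBD RB RD : Set V)
    (hQB : QB = {q ∈ Q | CompleteTo G {q} B ∧ ∃ d ∈ D, ¬ G.Adj q d})
    (hQD : QD = {q ∈ Q | CompleteTo G {q} D ∧ ∃ b ∈ B, ¬ G.Adj q b})
    (hQBD : QBD = {q ∈ Q | CompleteTo G {q} B ∧ CompleteTo G {q} D})
    (hRB : RB = {r ∈ R | ∃ q ∈ QB, G.Adj q r})
    (hRD : RD = {r ∈ R | ∃ q ∈ QD, G.Adj q r}) :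
    ∀ x ∈ QBD, CompleteTo G {x} RB ∨ CompleteTo G {x} RD := by
  subst hU hW hQB hQD hQBD hRB hRD
  rintro x ⟨hxQ, hxB, hxD⟩
  simp only [completeTo_singleton] at hxB hxD ⊢
  by_contra! ⟨⟨r, ⟨hrR, q, ⟨hqQ, hqB, d, hdD, hqd⟩, hqr⟩, hxr⟩,
    ⟨r', ⟨hr'R, q', ⟨hq'Q, hq'D, b, hbB, hq'b⟩, hq'r'⟩, hxr'⟩⟩
  obtain ⟨a, haA, hab⟩ := hB b hbB
  obtain ⟨c, hcC, hcd⟩ := hD d hdD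
  exact (hbip.adj_or_adj_of_pathFree_seven hP7 (.inl (.inl haA)) (.inl (.inr hqQ))
    (.inl (.inr hxQ)) (.inl (.inr hq'Q)) (.inr hcC) (.inl (.inl hbB)) (.inl (.inr hrR))
    (.inl (.inr hr'R)) (.inr hdD) hab hcd (hqB b hbB) hqr (hq'D d hdD) hq'r' (hxB b hbB)
    (hxD d hdD) hqd hq'b (hA haA (.inl hrR)) (hA haA (.inl hr'R)) (hA haA (.inr hdD))
    (hC hcC (.inl hbB)) (hC hcC (.inr hrR)) (hC hcC (.inr hr'R))).elim hxr hxr'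

/-- (Claim 2 of the paper.)  Under the stated assumptions, every vertex
of `Q_{BD}` is complete to at least one of the sets `R_B` and `R_D`. -/
theorem QBD_complete_to_RB_or_RD {V : Type u} (G : SimpleGraph V) (U W : Set V)
    (A Q C B R D : Set V)
    (hbip : IsBipartition G U W) (hP7 : PathFree 7 G)
    (hU : A ∪ Q ∪ C = U)
    (hUd : Disjoint A Q ∧ Disjoint A C ∧ Disjoint Q C)
    (hW : B ∪ R ∪ D = W)
    (hWd : Disjoint B R ∧ Disjoint B D ∧ Disjoint R D)
    (hB : ∀ b ∈ B, ∃ a ∈ A, G.Adj a b)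
    (hR : ∀ r ∈ R, ∃ q ∈ Q, G.Adj q r)
    (hD : ∀ d ∈ D, ∃ c ∈ C, G.Adj c d)
    (hA : AnticompleteTo G A (R ∪ D))
    (hC : AnticompleteTo G C (B ∪ R))
    (hQ : ∀ q ∈ Q, CompleteTo G {q} B ∨ CompleteTo G {q} D)
    (QB QD QBD RB RD : Set V)
    (hQB : QB = {q ∈ Q | CompleteTo G {q} B ∧ ∃ d ∈ D, ¬ G.Adj q d})
    (hQD : QD = {q ∈ Q | CompleteTo G {q} D ∧ ∃ b ∈ B, ¬ G.Adj q b})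
    (hQBD : QBD = {q ∈ Q | CompleteTo G {q} B ∧ CompleteTo G {q} D})
    (hRB : RB = {r ∈ R | ∃ q ∈ QB, G.Adj q r})
    (hRD : RD = {r ∈ R | ∃ q ∈ QD, G.Adj q r}) :
    ∀ x ∈ QBD, CompleteTo G {x} RB ∨ CompleteTo G {x} RD :=
  QBD_complete_to_RB_or_RD_general G U W A Q C B R D hbip hP7 hU hW hB hD hA hC QB QD QBD RB RD hQB
    hQD hQBD hRB hRD
end

section
/- Let G=(U,W,E) be a P_7-free bipartite graph and let x, y ∈ U be vertices maximizing |N(x) ∪ N(y)| over all pairs of vertices of U. Set S_x = N(x) ∖ N(y) and S_y = N(y) ∖ N(x). Then every vertex z ∈ U that has a neighbour in W ∖ (N(x) ∪ N(y)) is anticomplete to S_x or anticomplete to S_y. -/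
universe u

/-!
If `z` had neighbours `s_x ∈ S_x` and `s_y ∈ S_y`, then maximality of `|N(x) ∪ N(y)|`, applied to
the pairs `(z, y)` and `(x, z)`, both of which gain the neighbour `w ∉ N(x) ∪ N(y)` of `z`, gives
`a ∈ N(x) ∖ (N(y) ∪ N(z))` and `b ∈ N(y) ∖ (N(x) ∪ N(z))`. Then `a x s_x z s_y y b` is an induced
`P₇`: the chords between vertices on the same side are excluded by bipartiteness, the others by
the choice of the seven vertices.
-/

open SimpleGraph

section

variable {V : Type u} {G : SimpleGraph V}

theorem Set.exists_mem_notMem_of_ncard_le_of_mem_diff {α : Type*} {A B : Set α} {w : α}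
    (hB : B.Finite) (hle : B.ncard ≤ A.ncard) (hw : w ∈ B \ A) : ∃ a ∈ A, a ∉ B :=
  Set.not_subset.1 fun hAB => (Set.ncard_lt_ncard ⟨hAB, fun hBA => hw.2 (hBA hw.1)⟩ hB).not_ge hle

theorem hasInducedCopy_of_adj_iff {α : Type*} {H : SimpleGraph α}
    (hH : ∀ a b, (∀ c, H.Adj a c ↔ H.Adj b c) → a = b) (f : α → V)
    (hf : ∀ a b, G.Adj (f a) (f b) ↔ H.Adj a b) : HasInducedCopy H G :=
  ⟨⟨f, fun a b hab => hH a b fun c => by rw [← hf, ← hf, hab]⟩, hf⟩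

theorem anticompleteTo_singleton_left_iff {z : V} {S : Set V} :
    AnticompleteTo G {z} S ↔ ∀ s ∈ S, ¬ G.Adj z s :=
  ⟨fun h s hs => h rfl hs, fun h _ hx s hs => by rw [Set.mem_singleton_iff.1 hx]; exact h s hs⟩

theorem exists_private_neighbour_of_ncard_union_le [Finite V] {x y z w : V}
    (hle : (G.neighborSet z ∪ G.neighborSet y).ncard ≤ (G.neighborSet x ∪ G.neighborSet y).ncard)
    (hzw : G.Adj z w) (hw : w ∉ G.neighborSet x ∪ G.neighborSet y) :
    ∃ a, G.Adj x a ∧ ¬ G.Adj y a ∧ ¬ G.Adj z a := by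
  obtain ⟨a, hxy, hzy⟩ :=
    Set.exists_mem_notMem_of_ncard_le_of_mem_diff (Set.toFinite _) hle ⟨Or.inl hzw, hw⟩
  rw [Set.mem_union, not_or] at hzy
  exact ⟨a, hxy.resolve_right hzy.2, hzy.2, hzy.1⟩

theorem pathGraph_seven_twinFree :
    ∀ a b : Fin 7, (∀ c, (pathGraph 7).Adj a c ↔ (pathGraph 7).Adj b c) → a = b := by
  simp only [pathGraph_adj]
  decide

namespace IsBipartition

variable {U W : Set V}

theorem not_adj_of_mem_left_s16 (hG : IsBipartition G U W) {a b : V} (ha : a ∈ U) (hb : b ∈ U) :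
    ¬ G.Adj a b := fun h => by
  rcases hG.cross h with ⟨-, hbW⟩ | ⟨haW, -⟩
  · exact Set.disjoint_left.1 hG.disjoint hb hbW
  · exact Set.disjoint_left.1 hG.disjoint ha haW

theorem not_adj_of_mem_right (hG : IsBipartition G U W) {a b : V} (ha : a ∈ W) (hb : b ∈ W) :
    ¬ G.Adj a b := fun h => by
  rcases hG.cross h with ⟨haU, -⟩ | ⟨-, hbU⟩
  · exact Set.disjoint_left.1 hG.disjoint haU ha
  · exact Set.disjoint_left.1 hG.disjoint hbU hb

theorem mem_right_of_adj (hG : IsBipartition G U W) {a b : V} (ha : a ∈ U) (hab : G.Adj a b) :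
    b ∈ W :=
  (hG.cross hab).elim And.right fun h => absurd h.1 (Set.disjoint_left.1 hG.disjoint ha)

theorem hasInducedCopy_pathGraph_seven_s16 (hG : IsBipartition G U W) {v₀ v₁ v₂ v₃ v₄ v₅ v₆ : V}
    (h₀ : v₀ ∈ W) (h₁ : v₁ ∈ U) (h₂ : v₂ ∈ W) (h₃ : v₃ ∈ U) (h₄ : v₄ ∈ W) (h₅ : v₅ ∈ U)
    (h₆ : v₆ ∈ W) (h₀₁ : G.Adj v₀ v₁) (h₁₂ : G.Adj v₁ v₂) (h₂₃ : G.Adj v₂ v₃)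
    (h₃₄ : G.Adj v₃ v₄) (h₄₅ : G.Adj v₄ v₅) (h₅₆ : G.Adj v₅ v₆) (h₀₃ : ¬ G.Adj v₀ v₃)
    (h₀₅ : ¬ G.Adj v₀ v₅) (h₁₄ : ¬ G.Adj v₁ v₄) (h₁₆ : ¬ G.Adj v₁ v₆) (h₂₅ : ¬ G.Adj v₂ v₅)
    (h₃₆ : ¬ G.Adj v₃ v₆) : HasInducedCopy (pathGraph 7) G := by
  refine hasInducedCopy_of_adj_iff pathGraph_seven_twinFree ![v₀, v₁, v₂, v₃, v₄, v₅, v₆] ?_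
  intro i j
  fin_cases i <;> fin_cases j <;>
    simp [pathGraph_adj, G.adj_comm, hG.not_adj_of_mem_left_s16, hG.not_adj_of_mem_right, *]

end IsBipartition

end

/-- Let `G = (U, W, E)` be a `P₇`-free bipartite graph, let `x, y ∈ U`
maximize `|N(x) ∪ N(y)|`, and set `S_x = N(x) ∖ N(y)`, `S_y = N(y) ∖ N(x)`.  Then every
vertex `z ∈ U` with a neighbour in `W ∖ (N(x) ∪ N(y))` is anticomplete to `S_x` or
anticomplete to `S_y`. -/
theorem neighbour_outside_anticomplete {V : Type u} [Fintype V] (G : SimpleGraph V)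
    (U W : Set V) (hbip : IsBipartition G U W) (hP7 : PathFree 7 G)
    (x y : V) (hx : x ∈ U) (hy : y ∈ U)
    (hmax : ∀ a ∈ U, ∀ b ∈ U,
      (G.neighborSet a ∪ G.neighborSet b).ncard ≤
        (G.neighborSet x ∪ G.neighborSet y).ncard)
    (z : V) (hz : z ∈ U)
    (hzout : ∃ w ∈ W \ (G.neighborSet x ∪ G.neighborSet y), G.Adj z w) :
    AnticompleteTo G {z} (G.neighborSet x \ G.neighborSet y) ∨
      AnticompleteTo G {z} (G.neighborSet y \ G.neighborSet x) := by
  obtain ⟨w, ⟨-, hw⟩, hzw⟩ := hzout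
  rw [anticompleteTo_singleton_left_iff, anticompleteTo_singleton_left_iff]
  by_contra! ⟨⟨sx, ⟨hxsx, hysx⟩, hzsx⟩, ⟨sy, ⟨hysy, hxsy⟩, hzsy⟩⟩
  obtain ⟨a, hxa, hya, hza⟩ := exists_private_neighbour_of_ncard_union_le (hmax z hz y hy) hzw hw
  obtain ⟨b, hyb, hxb, hzb⟩ := exists_private_neighbour_of_ncard_union_le (x := y) (y := x)
    (by simpa only [Set.union_comm] using hmax x hx z hz) hzw (by rwa [Set.union_comm] at hw)
  exact hP7 (hbip.hasInducedCopy_pathGraph_seven_s16 (hbip.mem_right_of_adj hx hxa) hx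
    (hbip.mem_right_of_adj hx hxsx) hz (hbip.mem_right_of_adj hy hysy) hy
    (hbip.mem_right_of_adj hy hyb) hxa.symm hxsx hzsx.symm hzsy hysy.symm hyb
    (fun h => hza h.symm) (fun h => hya h.symm) hxsy hxb (fun h => hysx h.symm) hzb)
end
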